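/- Let ρ: SL(2,F_q) → GL(H) be the Weil representation (q odd) with dim H = q and character ch_ρ(g) = σ(−det(g−I)) for g−I invertible. Let T be a maximal torus (split or inert) of SL(2,F_q). Then the restriction of ch_ρ to T \ {I} equals σ_T if T is split and equals −σ_T if T is inert, where σ_T is the unique quadratic character of T. -/

import Mathlib

/-!
Write `A` for the matrix of `g ∈ T \ {1}`, `c = tr A - 2 = -det (A - 1)` and `q = 2m + 1`.
Cayley–Hamilton with `det A = 1` gives `(A - 1)² = c • A`, and Frobenius gives
`(A - 1)^q = A^q - 1`, so `c^m • A^m (A - 1) = A^q - 1`. On a split torus `A^q = A`, on an inert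
one `A^q = A⁻¹`; cancelling the invertible `A - 1` gives `c^m • 1 = A^(|T|/2)`, resp.
`c^m • 1 = -A^(|T|/2)`. By Euler's criterion `σ(c) = c^m`. Finally `A^(|T|/2) = σ_T(g) • 1`:
if `γ` generates `T` then `σ_T(γ) = -1`, and `γ^(|T|/2)` is an involution of `SL(2)` with
`γ^(|T|/2) - 1` invertible, hence equals `-1`.
-/

open Matrix

theorem MonoidHom.apply_generator_eq_neg_one {G K : Type*} [Group G] [CommRing K]
    [NoZeroDivisors K] {γ : G} (hγ : ∀ x, x ∈ Subgroup.zpowers γ) {χ : G →* Kˣ}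
    (hχ2 : χ * χ = 1) (hχ : χ ≠ 1) : χ γ = -1 := by
  have hsq : (χ γ : K) * χ γ = 1 := by
    simpa using congrArg (fun f : G →* Kˣ => (f γ : K)) hχ2
  refine Units.ext <| (mul_self_eq_one_iff.mp hsq).resolve_left fun h1 => hχ ?_
  ext x
  obtain ⟨j, rfl⟩ := Subgroup.mem_zpowers_iff.mp (hγ x)
  simp [map_zpow, Units.val_eq_one.mp h1]

section

variable {R : Type*} [CommRing R]

theorem Matrix.neg_det_sub_one_of_det_eq_one {A : Matrix (Fin 2) (Fin 2) R} (hA : A.det = 1) :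
    -(A - 1).det = A.trace - 2 := by
  rw [det_fin_two] at hA
  simp only [det_fin_two, trace_fin_two, Matrix.sub_apply, one_apply_eq, one_apply_ne, ne_eq,
    zero_ne_one, one_ne_zero, not_false_eq_true, sub_zero]
  linear_combination -hA

theorem Matrix.sub_one_sq_of_det_eq_one {A : Matrix (Fin 2) (Fin 2) R} (hA : A.det = 1) :
    (A - 1) ^ 2 = (A.trace - 2) • A := by
  rw [det_fin_two] at hA
  ext i j
  fin_cases i <;> fin_cases j <;>
    simp only [Fin.zero_eta, Fin.mk_one, Fin.isValue, sq, mul_apply, Matrix.sub_apply,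
      Fin.sum_univ_two, one_apply_eq, one_apply_ne, ne_eq, zero_ne_one, one_ne_zero,
      not_false_eq_true, sub_zero, trace_fin_two, Matrix.smul_apply, smul_eq_mul] <;>
    first | linear_combination -hA | ring

variable {n : Type*} [Fintype n] [DecidableEq n]

theorem Matrix.eq_neg_one_of_sq_eq_one {A : Matrix n n R} (hA : A ^ 2 = 1)
    (hu : IsUnit (A - 1).det) : A = -1 := by
  have h : (A - 1) * (A + 1) = 0 := by
    calc (A - 1) * (A + 1) = A ^ 2 - 1 := by noncomm_ring
      _ = 0 := by rw [hA, sub_self]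
  exact eq_neg_of_add_eq_zero_left
    (((A - 1).isUnit_iff_isUnit_det.mpr hu).mul_right_eq_zero.mp h)

theorem Matrix.SpecialLinearGroup.coe_coe_pow {T : Subgroup (SpecialLinearGroup n R)} (x : T)
    (j : ℕ) :
    (((x ^ j : T) : SpecialLinearGroup n R) : Matrix n n R) =
      ((x : SpecialLinearGroup n R) : Matrix n n R) ^ j :=
  map_pow (SpecialLinearGroup.coeMonoidHom.comp T.subtype) x j

theorem exists_apply_eq_neg_one_pow_and_pow_half_card_eq {K : Type*} [CommRing K]
    [NoZeroDivisors K] {T : Subgroup (SpecialLinearGroup n R)} [Fintype T] (hcyc : IsCyclic T)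
    (hreg : ∀ g ∈ T, g ≠ 1 → IsUnit ((g : Matrix n n R) - 1).det)
    (heven : Even (Fintype.card T)) {σ : T →* Kˣ} (hσ2 : σ * σ = 1) (hσ : σ ≠ 1) (g : T) :
    ∃ k : ℕ, (σ g : K) = (-1) ^ k ∧
      ((g : SpecialLinearGroup n R) : Matrix n n R) ^ (Fintype.card T / 2) =
        ((-1 : R) ^ k) • 1 := by
  obtain ⟨γ, hγ⟩ := hcyc.exists_generator
  have hord : orderOf γ = Fintype.card T := by
    rw [orderOf_eq_card_of_forall_mem_zpowers hγ, Nat.card_eq_fintype_card]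
  obtain ⟨k, rfl⟩ : ∃ k : ℕ, γ ^ k = g :=
    (Submonoid.mem_powers_iff _ _).mp (mem_powers_iff_mem_zpowers.mpr (hγ g))
  refine ⟨k, by simp [MonoidHom.apply_generator_eq_neg_one hγ hσ2 hσ], ?_⟩
  have hsq : (γ ^ (Fintype.card T / 2)) ^ 2 = 1 := by
    rw [← pow_mul, Nat.div_mul_cancel heven.two_dvd, ← hord, pow_orderOf_eq_one]
  have hne : γ ^ (Fintype.card T / 2) ≠ 1 :=
    pow_ne_one_of_lt_orderOf (by grind [Fintype.card_pos]) (by grind [Fintype.card_pos])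
  have hhalf : ((γ : SpecialLinearGroup n R) : Matrix n n R) ^ (Fintype.card T / 2) = -1 := by
    rw [← SpecialLinearGroup.coe_coe_pow]
    refine eq_neg_one_of_sq_eq_one ?_ (hreg _ (γ ^ _).2 (by exact_mod_cast hne))
    rw [← SpecialLinearGroup.coe_coe_pow, hsq]
    rfl
  rw [SpecialLinearGroup.coe_coe_pow, ← pow_mul, mul_comm, pow_mul, hhalf,
    ← neg_one_smul R (1 : Matrix n n R), smul_pow, one_pow]

end

section

variable {F : Type*} [Field F] [Fintype F]

theorem FiniteField.ringChar_ne_two_of_odd_card (hq : Odd (Fintype.card F)) : ringChar F ≠ 2 :=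
  fun h => by
    have := FiniteField.even_card_iff_char_two.mp h
    grind

theorem Matrix.sub_one_pow_card {n : Type*} [Fintype n] [DecidableEq n] [Nonempty n]
    (A : Matrix n n F) : (A - 1) ^ Fintype.card F = A ^ Fintype.card F - 1 := by
  obtain ⟨k, hp, hq⟩ := FiniteField.card F (ringChar F)
  have : Fact (ringChar F).Prime := ⟨hp⟩
  rw [hq, sub_pow_char_pow_of_commute (ringChar F) k (Commute.one_right A), one_pow]

theorem quadraticChar_eq_of_pow_card_div_two_eq [DecidableEq F] (hF : ringChar F ≠ 2) {x : F}
    {s : ℤ} (hs : s = 1 ∨ s = -1) (h : x ^ (Fintype.card F / 2) = s) : quadraticChar F x = s :=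
  Int.cast_injOn_of_ringChar_ne_two hF (by simpa using quadraticChar_isQuadratic F x)
    (by simpa using Or.inr hs) (by rw [quadraticChar_eq_pow_of_char_ne_two' hF, h])

variable {A : Matrix (Fin 2) (Fin 2) F}

theorem Matrix.trace_sub_two_pow_smul_mul_sub_one (hA : A.det = 1) (hq : Odd (Fintype.card F)) :
    (A.trace - 2) ^ (Fintype.card F / 2) • A ^ (Fintype.card F / 2) * (A - 1) =
      A ^ Fintype.card F - 1 := by
  obtain ⟨m, hm⟩ := hq
  rw [← sub_one_pow_card, hm, show (2 * m + 1) / 2 = m by omega, pow_succ, pow_mul,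
    sub_one_sq_of_det_eq_one hA, smul_pow]

theorem Matrix.trace_sub_two_pow_smul_one_of_pow_card_sub_one (hA : A.det = 1)
    (hq : Odd (Fintype.card F)) (hu : IsUnit (A - 1).det) (hT : A ^ (Fintype.card F - 1) = 1) :
    (A.trace - 2) ^ (Fintype.card F / 2) • (1 : Matrix (Fin 2) (Fin 2) F) =
      A ^ ((Fintype.card F - 1) / 2) := by
  set m := Fintype.card F / 2
  have hm : Fintype.card F - 1 = m + m := by grind
  rw [show (Fintype.card F - 1) / 2 = m by omega]
  have hAq : A ^ Fintype.card F = A := by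
    rw [show Fintype.card F = Fintype.card F - 1 + 1 by grind, pow_succ, hT, one_mul]
  have key : (A.trace - 2) ^ m • A ^ m = 1 :=
    ((A - 1).isUnit_iff_isUnit_det.mpr hu).mul_left_inj.mp <| by
      rw [trace_sub_two_pow_smul_mul_sub_one hA hq, hAq, one_mul]
  calc (A.trace - 2) ^ m • (1 : Matrix (Fin 2) (Fin 2) F)
      = (A.trace - 2) ^ m • A ^ m * A ^ m := by rw [smul_mul_assoc, ← pow_add, ← hm, hT]
    _ = A ^ m := by rw [key, one_mul]

theorem Matrix.trace_sub_two_pow_smul_one_of_pow_card_add_one (hA : A.det = 1)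
    (hq : Odd (Fintype.card F)) (hu : IsUnit (A - 1).det) (hT : A ^ (Fintype.card F + 1) = 1) :
    (A.trace - 2) ^ (Fintype.card F / 2) • (1 : Matrix (Fin 2) (Fin 2) F) =
      -A ^ ((Fintype.card F + 1) / 2) := by
  set m := Fintype.card F / 2
  have hm : Fintype.card F + 1 = (m + 1) + (m + 1) := by grind
  rw [show (Fintype.card F + 1) / 2 = m + 1 by omega]
  have key : (A.trace - 2) ^ m • A ^ (m + 1) = -1 :=
    ((A - 1).isUnit_iff_isUnit_det.mpr hu).mul_left_inj.mp <| by
      calc (A.trace - 2) ^ m • A ^ (m + 1) * (A - 1)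
          = ((A.trace - 2) ^ m • A ^ m * (A - 1)) * A := by
            rw [pow_succ, smul_mul_assoc, smul_mul_assoc, smul_mul_assoc, mul_assoc, mul_assoc,
              (Commute.sub_right (Commute.refl A) (Commute.one_right A)).eq]
        _ = -1 * (A - 1) := by
            rw [trace_sub_two_pow_smul_mul_sub_one hA hq, sub_mul, ← pow_succ, hT]
            noncomm_ring
  calc (A.trace - 2) ^ m • (1 : Matrix (Fin 2) (Fin 2) F)
      = (A.trace - 2) ^ m • A ^ (m + 1) * A ^ (m + 1) := by
        rw [smul_mul_assoc, ← pow_add, ← hm, hT]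
    _ = -A ^ (m + 1) := by rw [key, neg_one_mul]

variable [DecidableEq F]

theorem Matrix.quadraticChar_trace_sub_two_of_pow_card_sub_one (hA : A.det = 1)
    (hq : Odd (Fintype.card F)) (hu : IsUnit (A - 1).det) (hT : A ^ (Fintype.card F - 1) = 1)
    {k : ℕ} (hk : A ^ ((Fintype.card F - 1) / 2) = ((-1 : F) ^ k) • 1) :
    quadraticChar F (A.trace - 2) = (-1) ^ k := by
  refine quadraticChar_eq_of_pow_card_div_two_eq (FiniteField.ringChar_ne_two_of_odd_card hq)
    (neg_one_pow_eq_or ℤ k)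
    (smul_left_injective F (one_ne_zero : (1 : Matrix (Fin 2) (Fin 2) F) ≠ 0) ?_)
  dsimp only
  rw [trace_sub_two_pow_smul_one_of_pow_card_sub_one hA hq hu hT, hk]
  push_cast
  rfl

theorem Matrix.quadraticChar_trace_sub_two_of_pow_card_add_one (hA : A.det = 1)
    (hq : Odd (Fintype.card F)) (hu : IsUnit (A - 1).det) (hT : A ^ (Fintype.card F + 1) = 1)
    {k : ℕ} (hk : A ^ ((Fintype.card F + 1) / 2) = ((-1 : F) ^ k) • 1) :
    quadraticChar F (A.trace - 2) = -(-1) ^ k := by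
  refine quadraticChar_eq_of_pow_card_div_two_eq (FiniteField.ringChar_ne_two_of_odd_card hq)
    (by rcases neg_one_pow_eq_or ℤ k with h | h <;> simp [h])
    (smul_left_injective F (one_ne_zero : (1 : Matrix (Fin 2) (Fin 2) F) ≠ 0) ?_)
  dsimp only
  rw [trace_sub_two_pow_smul_one_of_pow_card_add_one hA hq hu hT, hk]
  push_cast
  rw [neg_smul]

end

theorem stmt_19_general (F : Type*) [Field F] [Fintype F] [DecidableEq F]
    (hodd : Odd (Fintype.card F))
    (H : Type*) [AddCommGroup H] [Module ℂ H]
    (ρ : Representation ℂ (Matrix.SpecialLinearGroup (Fin 2) F) H)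
    (hch : ∀ g : Matrix.SpecialLinearGroup (Fin 2) F,
      IsUnit ((g : Matrix (Fin 2) (Fin 2) F) - 1).det →
      LinearMap.trace ℂ H (ρ g) =
        ((quadraticChar F (-((g : Matrix (Fin 2) (Fin 2) F) - 1).det) : ℤ) : ℂ))
    (T : Subgroup (Matrix.SpecialLinearGroup (Fin 2) F)) [Fintype ↥T]
    (hcyc : IsCyclic ↥T)
    (hreg : ∀ g ∈ T, g ≠ 1 → IsUnit ((g : Matrix (Fin 2) (Fin 2) F) - 1).det)
    (σT : ↥T →* ℂˣ) (hσ2 : σT * σT = 1) (hσne : σT ≠ 1) :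
    (Fintype.card ↥T = Fintype.card F - 1 →
      ∀ g : ↥T, g ≠ 1 → LinearMap.trace ℂ H (ρ ↑g) = ((σT g : ℂˣ) : ℂ)) ∧
    (Fintype.card ↥T = Fintype.card F + 1 →
      ∀ g : ↥T, g ≠ 1 → LinearMap.trace ℂ H (ρ ↑g) = -((σT g : ℂˣ) : ℂ)) := by
  have hu (g : T) (hg : g ≠ 1) :
      IsUnit (((g : SpecialLinearGroup (Fin 2) F) : Matrix (Fin 2) (Fin 2) F) - 1).det :=
    hreg g g.2 (by exact_mod_cast hg)
  have htrace (g : T) (hg : g ≠ 1) : LinearMap.trace ℂ H (ρ g) = quadraticChar F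
      (((g : SpecialLinearGroup (Fin 2) F) : Matrix (Fin 2) (Fin 2) F).trace - 2) := by
    rw [hch _ (hu g hg), neg_det_sub_one_of_det_eq_one (Matrix.SpecialLinearGroup.det_coe _)]
  have hpow_card (g : T) :
      ((g : SpecialLinearGroup (Fin 2) F) : Matrix (Fin 2) (Fin 2) F) ^ Fintype.card T = 1 := by
    rw [← SpecialLinearGroup.coe_coe_pow, pow_card_eq_one]
    rfl
  refine ⟨fun hcard g hg => ?_, fun hcard g hg => ?_⟩
  · obtain ⟨k, hσ, hhalf⟩ := exists_apply_eq_neg_one_pow_and_pow_half_card_eq hcyc hreg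
      (hcard ▸ Nat.Odd.sub_odd hodd odd_one) hσ2 hσne g
    rw [hcard] at hhalf
    rw [htrace g hg, quadraticChar_trace_sub_two_of_pow_card_sub_one
      (Matrix.SpecialLinearGroup.det_coe _) hodd (hu g hg) (hcard ▸ hpow_card g) hhalf, hσ]
    simp
  · obtain ⟨k, hσ, hhalf⟩ := exists_apply_eq_neg_one_pow_and_pow_half_card_eq hcyc hreg
      (hcard ▸ hodd.add_one) hσ2 hσne g
    rw [hcard] at hhalf
    rw [htrace g hg, quadraticChar_trace_sub_two_of_pow_card_add_one
      (Matrix.SpecialLinearGroup.det_coe _) hodd (hu g hg) (hcard ▸ hpow_card g) hhalf, hσ]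
    simp

/-- The character of the Weil representation of `SL(2,F_q)` restricted to the punctured
maximal torus `T \ {I}` equals `σ_T` if `T` is split (order `q-1`) and `-σ_T` if `T` is
inert (order `q+1`), where `σ_T` is the unique quadratic character of `T`. -/
theorem stmt_19 (F : Type*) [Field F] [Fintype F] [DecidableEq F]
    (hodd : Odd (Fintype.card F))
    (H : Type*) [AddCommGroup H] [Module ℂ H] [FiniteDimensional ℂ H]
    (ρ : Representation ℂ (Matrix.SpecialLinearGroup (Fin 2) F) H)
    (hdim : Module.finrank ℂ H = Fintype.card F)
    (hch : ∀ g : Matrix.SpecialLinearGroup (Fin 2) F,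
      IsUnit ((g : Matrix (Fin 2) (Fin 2) F) - 1).det →
      LinearMap.trace ℂ H (ρ g) =
        ((quadraticChar F (-((g : Matrix (Fin 2) (Fin 2) F) - 1).det) : ℤ) : ℂ))
    (T : Subgroup (Matrix.SpecialLinearGroup (Fin 2) F)) [Fintype ↥T]
    (hcyc : IsCyclic ↥T)
    (hreg : ∀ g ∈ T, g ≠ 1 → IsUnit ((g : Matrix (Fin 2) (Fin 2) F) - 1).det)
    (σT : ↥T →* ℂˣ) (hσ2 : σT * σT = 1) (hσne : σT ≠ 1) :
    (Fintype.card ↥T = Fintype.card F - 1 →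
      ∀ g : ↥T, g ≠ 1 → LinearMap.trace ℂ H (ρ ↑g) = ((σT g : ℂˣ) : ℂ)) ∧
    (Fintype.card ↥T = Fintype.card F + 1 →
      ∀ g : ↥T, g ≠ 1 → LinearMap.trace ℂ H (ρ ↑g) = -((σT g : ℂˣ) : ℂ)) :=
  stmt_19_general F hodd H ρ hch T hcyc hreg σT hσ2 hσne
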